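/- Let U ⊆ ℝⁿ be a convex open set, r ≥ n, A : U → (ℝⁿ →ₗ[ℝ] ℝʳ →ₗ[ℝ] ℝʳ) a smooth connection form, and Φ : U → (ℝⁿ →ₗ[ℝ] ℝʳ) a smooth bundle map. Assume: (1) there is a smooth parallel frame, i.e. a smooth map e : U → (ℝʳ →ₗ[ℝ] ℝʳ) with e x invertible for every x and fderiv ℝ e x v + (A x v) ∘ (e x) = 0 for all x ∈ U, v ∈ ℝⁿ; (2) A is relatively torsion-free with respect to Φ, i.e. for all x ∈ U and v, w ∈ ℝⁿ: fderiv ℝ (fun y ↦ Φ y w) x v + A x v (Φ x w) = fderiv ℝ (fun y ↦ Φ y v) x w + A x w (Φ x v). Then there exists a smooth map f : U → ℝʳ such that fderiv ℝ f x = (e x)⁻¹ ∘ (Φ x) for every x ∈ U; in particular, if Φ x is injective for every x, then f is an immersion. (Paper's Proposition 4.2, via the Poincaré lemma, in a trivialization with a chosen parallel frame.) -/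

import Mathlib

/-!
Read the bundle map in the parallel frame: `θ x = (e x)⁻¹ ∘ Φ x`, so that `Φ = e θ`. Because `e` is
parallel, the covariant derivative of a section `e σ` is `e` applied to the ordinary derivative
of `σ`; relative torsion-freeness therefore says that `e x (dθ(v) w)` is symmetric in `v, w`, and
since `e x` is invertible, `θ` is a closed `ℝʳ`-valued `1`-form. On the convex set `U` the
Poincaré lemma gives `f` with `df = θ`, i.e. `e ∘ df = Φ`.
-/

noncomputable section

section Connection

variable {𝕜 E F : Type*} [NontriviallyNormedField 𝕜]
  [NormedAddCommGroup E] [NormedSpace 𝕜 E] [NormedAddCommGroup F] [NormedSpace 𝕜 F]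

theorem ContDiffOn.ringInverse {R : Type*} [NormedRing R] [NormedAlgebra 𝕜 R]
    [HasSummableGeomSeries R] {n : WithTop ℕ∞} {f : E → R} {s : Set E}
    (hf : ContDiffOn 𝕜 n f s) (hunit : ∀ x ∈ s, IsUnit (f x)) :
    ContDiffOn 𝕜 n (fun x => Ring.inverse (f x)) s := fun x hx => by
  have hinv := contDiffAt_ringInverse 𝕜 (n := n) (hunit x hx).unit
  rw [IsUnit.unit_spec] at hinv
  exact hinv.comp_contDiffWithinAt x (hf x hx)

def covDeriv (A : E → E →L[𝕜] F →L[𝕜] F) (ν : E → F) (x v : E) : F :=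
  fderiv 𝕜 ν x v + A x v (ν x)

theorem Filter.EventuallyEq.covDeriv_eq {A : E → E →L[𝕜] F →L[𝕜] F} {ν μ : E → F} {x : E}
    (h : ν =ᶠ[nhds x] μ) (v : E) : covDeriv A ν x v = covDeriv A μ x v := by
  rw [covDeriv, covDeriv, h.fderiv_eq, h.eq_of_nhds]

theorem covDeriv_frame_apply {A : E → E →L[𝕜] F →L[𝕜] F} {e : E → F →L[𝕜] F} {σ : E → F} {x : E}
    (he : DifferentiableAt 𝕜 e x) (hσ : DifferentiableAt 𝕜 σ x)
    (hpar : ∀ v, fderiv 𝕜 e x v + (A x v).comp (e x) = 0) (v : E) :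
    covDeriv A (fun y => e y (σ y)) x v = e x (fderiv 𝕜 σ x v) := by
  have hev : fderiv 𝕜 e x v (σ x) = -A x v (e x (σ x)) := by
    rw [eq_neg_iff_add_eq_zero, ← ContinuousLinearMap.comp_apply,
      ← add_apply, hpar, zero_apply]
  simp [covDeriv, fderiv_clm_apply he hσ, hev]

theorem fderiv_symmetric_of_parallel_frame {A : E → E →L[𝕜] F →L[𝕜] F} {e : E → F →L[𝕜] F}
    {Φ θ : E → E →L[𝕜] F} {x : E}
    (he : DifferentiableAt 𝕜 e x) (hθ : DifferentiableAt 𝕜 θ x)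
    (hpar : ∀ v, fderiv 𝕜 e x v + (A x v).comp (e x) = 0) (hinj : Function.Injective (e x))
    (hΦ : ∀ᶠ y in nhds x, (e y).comp (θ y) = Φ y)
    (htf : ∀ v w, covDeriv A (fun y => Φ y w) x v = covDeriv A (fun y => Φ y v) x w) (v w : E) :
    fderiv 𝕜 θ x v w = fderiv 𝕜 θ x w v := by
  have hcov : ∀ v w, covDeriv A (fun y => Φ y w) x v = e x (fderiv 𝕜 θ x v w) := fun v w => by
    have hloc : (fun y => e y (θ y w)) =ᶠ[nhds x] fun y => Φ y w :=
      hΦ.mono fun y hy => by simp [← hy]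
    rw [← hloc.covDeriv_eq, covDeriv_frame_apply he (hθ.clm_apply (differentiableAt_const w)) hpar,
      fderiv_clm_apply hθ (differentiableAt_const w)]
    simp
  exact hinj (by rw [← hcov, ← hcov, htf])

end Connection

theorem Convex.exists_contDiffOn_hasFDerivAt_of_fderiv_symmetric {E F : Type*}
    [NormedAddCommGroup E] [NormedSpace ℝ E] [NormedAddCommGroup F] [NormedSpace ℝ F]
    [CompleteSpace F] {s : Set E} {ω : E → E →L[ℝ] F} {n : ℕ∞}
    (hs : Convex ℝ s) (hso : IsOpen s) (hω : ContDiffOn ℝ n ω s) (hn : 1 ≤ n)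
    (hdω : ∀ a ∈ s, ∀ x y, fderiv ℝ ω a x y = fderiv ℝ ω a y x) :
    ∃ f, ContDiffOn ℝ (n + 1) f s ∧ ∀ a ∈ s, HasFDerivAt f (ω a) a := by
  obtain ⟨f, hf⟩ := hs.exists_forall_hasFDerivAt_of_fderiv_symmetric hso
    (hω.differentiableOn (by exact_mod_cast (zero_lt_one.trans_le hn).ne')) hdω
  refine ⟨f, (contDiffOn_succ_iff_fderiv_of_isOpen hso).2 ⟨?_, by simp, ?_⟩, hf⟩
  · exact fun a ha => (hf a ha).differentiableAt.differentiableWithinAt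
  · exact hω.congr fun a ha => (hf a ha).fderiv

theorem statement19_general {n r : ℕ}
    (U : Set (Fin n → ℝ)) (hUopen : IsOpen U) (hUconv : Convex ℝ U)
    (A : (Fin n → ℝ) → ((Fin n → ℝ) →L[ℝ] (Fin r → ℝ) →L[ℝ] (Fin r → ℝ)))
    (Φ : (Fin n → ℝ) → ((Fin n → ℝ) →L[ℝ] (Fin r → ℝ)))
    (hΦsmooth : ContDiffOn ℝ (⊤ : ℕ∞) Φ U)
    -- (1) a smooth parallel frame
    (e : (Fin n → ℝ) → ((Fin r → ℝ) →L[ℝ] (Fin r → ℝ)))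
    (hesmooth : ContDiffOn ℝ (⊤ : ℕ∞) e U)
    (hebij : ∀ x ∈ U, Function.Bijective (e x))
    (hepar : ∀ x ∈ U, ∀ v : Fin n → ℝ,
      fderiv ℝ e x v + (A x v).comp (e x) = 0)
    -- (2) A is relatively torsion-free with respect to Φ
    (htf : ∀ x ∈ U, ∀ v w : Fin n → ℝ,
      fderiv ℝ (fun y => Φ y w) x v + A x v (Φ x w)
        = fderiv ℝ (fun y => Φ y v) x w + A x w (Φ x v)) :
    ∃ f : (Fin n → ℝ) → (Fin r → ℝ),
      ContDiffOn ℝ (⊤ : ℕ∞) f U ∧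
      (∀ x ∈ U, (e x).comp (fderiv ℝ f x) = Φ x) ∧
      ((∀ x ∈ U, Function.Injective (Φ x)) →
        ∀ x ∈ U, Function.Injective (fderiv ℝ f x)) := by
  have hunit : ∀ x ∈ U, IsUnit (e x) := fun x hx =>
    ContinuousLinearMap.isUnit_iff_bijective.mpr (hebij x hx)
  set θ := fun x => (Ring.inverse (e x)).comp (Φ x)
  have heθ : ∀ x ∈ U, (e x).comp (θ x) = Φ x := fun x hx => by
    rw [← ContinuousLinearMap.comp_assoc, ← ContinuousLinearMap.mul_def,
      Ring.mul_inverse_cancel _ (hunit x hx), ContinuousLinearMap.one_def,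
      ContinuousLinearMap.id_comp]
  have hθ : ContDiffOn ℝ (⊤ : ℕ∞) θ U := (hesmooth.ringInverse hunit).clm_comp hΦsmooth
  have hsym : ∀ x ∈ U, ∀ v w, fderiv ℝ θ x v w = fderiv ℝ θ x w v := fun x hx =>
    have hxU := hUopen.mem_nhds hx
    fderiv_symmetric_of_parallel_frame ((hesmooth.contDiffAt hxU).differentiableAt (by simp))
      ((hθ.contDiffAt hxU).differentiableAt (by simp)) (hepar x hx) (hebij x hx).injective
      (Filter.eventually_of_mem hxU heθ) (htf x hx)
  obtain ⟨f, hf, hfθ⟩ :=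
    hUconv.exists_contDiffOn_hasFDerivAt_of_fderiv_symmetric hUopen hθ le_top hsym
  refine ⟨f, by rwa [ENat.coe_top_add_one] at hf, fun x hx => ?_, fun hinj x hx => ?_⟩
  · rw [(hfθ x hx).fderiv, heθ x hx]
  · rw [(hfθ x hx).fderiv]
    have hΦinj := hinj x hx
    rw [← heθ x hx, ContinuousLinearMap.coe_comp] at hΦinj
    exact hΦinj.of_comp

/-- Paper's Proposition 4.2 (in a trivialization with a chosen parallel frame):
on a convex open `U ⊆ ℝⁿ`, if the connection with connection form `A` on the
trivial bundle `U × ℝʳ` admits a smooth parallel frame `e`, and `A` is relatively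
torsion-free with respect to the bundle map `Φ : TU → U × ℝʳ`, then there is a
smooth map `f : U → ℝʳ` with `fderiv ℝ f x = (e x)⁻¹ ∘ Φ x` (expressed as
`(e x) ∘ (fderiv ℝ f x) = Φ x`) for all `x ∈ U`; in particular if every `Φ x` is
injective then `f` is an immersion. -/
theorem statement19 {n r : ℕ} (hr : n ≤ r)
    (U : Set (Fin n → ℝ)) (hUopen : IsOpen U) (hUconv : Convex ℝ U)
    (A : (Fin n → ℝ) → ((Fin n → ℝ) →L[ℝ] (Fin r → ℝ) →L[ℝ] (Fin r → ℝ)))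
    (hAsmooth : ContDiffOn ℝ (⊤ : ℕ∞) A U)
    (Φ : (Fin n → ℝ) → ((Fin n → ℝ) →L[ℝ] (Fin r → ℝ)))
    (hΦsmooth : ContDiffOn ℝ (⊤ : ℕ∞) Φ U)
    -- (1) a smooth parallel frame
    (e : (Fin n → ℝ) → ((Fin r → ℝ) →L[ℝ] (Fin r → ℝ)))
    (hesmooth : ContDiffOn ℝ (⊤ : ℕ∞) e U)
    (hebij : ∀ x ∈ U, Function.Bijective (e x))
    (hepar : ∀ x ∈ U, ∀ v : Fin n → ℝ,
      fderiv ℝ e x v + (A x v).comp (e x) = 0)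
    -- (2) A is relatively torsion-free with respect to Φ
    (htf : ∀ x ∈ U, ∀ v w : Fin n → ℝ,
      fderiv ℝ (fun y => Φ y w) x v + A x v (Φ x w)
        = fderiv ℝ (fun y => Φ y v) x w + A x w (Φ x v)) :
    ∃ f : (Fin n → ℝ) → (Fin r → ℝ),
      ContDiffOn ℝ (⊤ : ℕ∞) f U ∧
      (∀ x ∈ U, (e x).comp (fderiv ℝ f x) = Φ x) ∧
      ((∀ x ∈ U, Function.Injective (Φ x)) →
        ∀ x ∈ U, Function.Injective (fderiv ℝ f x)) :=
  statement19_general U hUopen hUconv A Φ hΦsmooth e hesmooth hebij hepar htf
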